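/- Let (M,q) be a metric group and let L1, L2, L3 be Lagrangian subgroups of M. Let x1 ∈ L1, x2 ∈ L2 with x := x1 + x2 ∈ L3. Then the following are equivalent: (a) for all y1 ∈ L1 and y2 ∈ L2 with y1 + y2 ∈ L3 one has b_q(x1, y2) = 1; (b) x ∈ (L1 ∩ L3) + (L2 ∩ L3). (That is, the kernel of the bicharacter c(x,y) := b_q(x1,y2) on A := (L1+L2) ∩ L3 equals B := (L1 ∩ L3) + (L2 ∩ L3).) -/

import Mathlib

/-- The symmetric bicharacter associated to a quadratic form `q` with values in `ℂˣ`. -/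
def bq {M : Type*} [AddCommGroup M] (q : M → ℂˣ) (x y : M) : ℂˣ :=
  q (x + y) * (q x)⁻¹ * (q y)⁻¹

/-- `(M, q)` is a metric group: `q` is even, `b_q` is biadditive and nondegenerate. -/
def IsMetric {M : Type*} [AddCommGroup M] (q : M → ℂˣ) : Prop :=
  (∀ x, q (-x) = q x) ∧
  (∀ x y z, bq q (x + y) z = bq q x z * bq q y z) ∧
  (∀ x y z, bq q x (y + z) = bq q x y * bq q x z) ∧
  (∀ x, (∀ y, bq q x y = 1) → x = 0)

/-- A subgroup `L` is Lagrangian for `q` if `q = 1` on `L` and `|L|² = |M|`. -/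
def IsLagrangian {M : Type*} [AddCommGroup M] (q : M → ℂˣ) (L : AddSubgroup M) : Prop :=
  (∀ x ∈ L, q x = 1) ∧ Nat.card L ^ 2 = Nat.card M

/-!
Nondegeneracy of `b_q` gives `|N^⊥| · |N| = |M|` for every subgroup `N` (count the values of
the character sum `∑_{x ∈ M} ∑_{y ∈ N} b_q(x, y)` by rows and by columns). Hence `N ↦ N^⊥` is
an involution on subgroups; it turns sums into intersections and therefore also intersections
into sums, and it fixes every Lagrangian. Condition (a) says precisely that `x₁` is orthogonal
to `L₂ ∩ (L₁ + L₃)`, i.e. `x₁ ∈ L₂ + (L₁ ∩ L₃)`, and since `x₂ ∈ L₂` and `x₁ + x₂ ∈ L₃`, this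
is equivalent to `x₁ + x₂ ∈ (L₁ ∩ L₃) + (L₂ ∩ L₃)`.
-/

namespace AddSubgroup

variable {G : Type*} [AddCommGroup G]

lemma mem_sup_iff_exists_add_mem {A C : AddSubgroup G} {y : G} :
    y ∈ A ⊔ C ↔ ∃ a ∈ A, a + y ∈ C := by
  rw [mem_sup]
  constructor
  · rintro ⟨a, ha, c, hc, rfl⟩
    exact ⟨-a, neg_mem ha, by simpa using hc⟩
  · rintro ⟨a, ha, hc⟩
    exact ⟨-a, neg_mem ha, a + y, hc, by abel⟩

lemma add_mem_inf_sup_inf_iff {A B C : AddSubgroup G} {x₁ x₂ : G} (hx₂ : x₂ ∈ B)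
    (hx : x₁ + x₂ ∈ C) : x₁ + x₂ ∈ A ⊓ C ⊔ B ⊓ C ↔ x₁ ∈ B ⊔ A ⊓ C := by
  simp only [mem_sup, mem_inf]
  constructor
  · rintro ⟨a, ha, b, hb, hab⟩
    exact ⟨b - x₂, sub_mem hb.1 hx₂, a, ha, by rw [← add_sub_cancel_right x₁ x₂, ← hab]; abel⟩
  · rintro ⟨b, hb, a, ha, rfl⟩
    refine ⟨a, ha, b + x₂, ⟨add_mem hb hx₂, ?_⟩, by abel⟩
    simpa [add_right_comm b a x₂] using sub_mem hx ha.2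

end AddSubgroup

lemma bq_comm {M : Type*} [AddCommGroup M] (q : M → ℂˣ) (x y : M) : bq q x y = bq q y x := by
  unfold bq
  rw [add_comm x y, mul_right_comm]

lemma bq_eq_one_of_isotropic {M : Type*} [AddCommGroup M] {q : M → ℂˣ} {L : AddSubgroup M}
    (hL : ∀ x ∈ L, q x = 1) {x y : M} (hx : x ∈ L) (hy : y ∈ L) : bq q x y = 1 := by
  simp [bq, hL _ (add_mem hx hy), hL _ hx, hL _ hy]

namespace IsMetric

variable {M : Type*} [AddCommGroup M] {q : M → ℂˣ}

lemma bq_add_left (hq : IsMetric q) (x y z : M) : bq q (x + y) z = bq q x z * bq q y z :=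
  hq.2.1 x y z

lemma bq_add_right (hq : IsMetric q) (x y z : M) : bq q x (y + z) = bq q x y * bq q x z :=
  hq.2.2.1 x y z

lemma bq_zero_right (hq : IsMetric q) (x : M) : bq q x 0 = 1 :=
  left_eq_mul.mp (by rw [← hq.bq_add_right, add_zero] : bq q x 0 = bq q x 0 * bq q x 0)

lemma bq_zero_left (hq : IsMetric q) (y : M) : bq q 0 y = 1 := by
  rw [bq_comm, hq.bq_zero_right]

lemma bq_neg_left (hq : IsMetric q) (x y : M) : bq q (-x) y = (bq q x y)⁻¹ :=
  eq_inv_of_mul_eq_one_left (by rw [← hq.bq_add_left, neg_add_cancel, hq.bq_zero_left])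

def bqChar (hq : IsMetric q) (x : M) : AddChar M ℂ where
  toFun y := (bq q x y : ℂ)
  map_zero_eq_one' := by simp [hq.bq_zero_right]
  map_add_eq_mul' y z := by simp [hq.bq_add_right]

@[simp]
lemma bqChar_apply (hq : IsMetric q) (x y : M) : hq.bqChar x y = bq q x y := rfl

lemma bqChar_eq_zero_iff (hq : IsMetric q) {x : M} : hq.bqChar x = 0 ↔ x = 0 := by
  refine ⟨fun h ↦ hq.2.2.2 x fun y ↦ ?_, ?_⟩
  · exact Units.val_eq_one.mp (by simpa using DFunLike.congr_fun h y)
  · rintro rfl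
    ext y
    simp [hq.bq_zero_left]

def perp (hq : IsMetric q) (N : AddSubgroup M) : AddSubgroup M where
  carrier := {x | ∀ y ∈ N, bq q x y = 1}
  zero_mem' y _ := hq.bq_zero_left y
  add_mem' ha hb y hy := by rw [hq.bq_add_left, ha y hy, hb y hy, one_mul]
  neg_mem' ha y hy := by rw [hq.bq_neg_left, ha y hy, inv_one]

lemma mem_perp (hq : IsMetric q) {N : AddSubgroup M} {x : M} :
    x ∈ hq.perp N ↔ ∀ y ∈ N, bq q x y = 1 :=
  Iff.rfl

lemma card_perp_mul_card [Finite M] (hq : IsMetric q) (N : AddSubgroup M) :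
    Nat.card (hq.perp N) * Nat.card N = Nat.card M := by
  classical
  have := Fintype.ofFinite M
  have hrow (x : M) : ∑ y : N, hq.bqChar x y = if x ∈ hq.perp N then (Nat.card N : ℂ) else 0 := by
    have hres : (hq.bqChar x).compAddMonoidHom N.subtype = 0 ↔ x ∈ hq.perp N := by
      simp [AddChar.eq_zero_iff, mem_perp]
    simpa [hres, Nat.card_eq_fintype_card] using
      AddChar.sum_eq_ite ((hq.bqChar x).compAddMonoidHom N.subtype)
  have hcol (y : N) : ∑ x : M, hq.bqChar x y = if (y : M) = 0 then (Nat.card M : ℂ) else 0 := by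
    simpa [bq_comm q _ (y : M), hq.bqChar_eq_zero_iff, Nat.card_eq_fintype_card] using
      AddChar.sum_eq_ite (hq.bqChar y)
  have hsum : ((Nat.card (hq.perp N) * Nat.card N : ℕ) : ℂ) = Nat.card M := by
    calc ((Nat.card (hq.perp N) * Nat.card N : ℕ) : ℂ)
        = ∑ x : M, ∑ y : N, hq.bqChar x y := by
          rw [Finset.sum_congr rfl fun x _ ↦ hrow x, Finset.sum_ite, Finset.sum_const_zero,
            add_zero, Finset.sum_const, nsmul_eq_mul, ← Fintype.card_subtype,
            ← Nat.card_eq_fintype_card, Nat.cast_mul]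
      _ = ∑ y : N, ∑ x : M, hq.bqChar x y := Finset.sum_comm
      _ = Nat.card M := by rw [Finset.sum_congr rfl fun y _ ↦ hcol y]; simp
  exact_mod_cast hsum

lemma le_perp_perp (hq : IsMetric q) (N : AddSubgroup M) : N ≤ hq.perp (hq.perp N) :=
  fun x hx y hy ↦ by rw [bq_comm]; exact hy x hx

lemma perp_perp [Finite M] (hq : IsMetric q) (N : AddSubgroup M) :
    hq.perp (hq.perp N) = N := by
  have hcard : Nat.card (hq.perp (hq.perp N)) * Nat.card (hq.perp N) =
      Nat.card N * Nat.card (hq.perp N) :=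
    (hq.card_perp_mul_card _).trans ((hq.card_perp_mul_card N).symm.trans (mul_comm _ _))
  exact (AddSubgroup.eq_of_le_of_card_ge (hq.le_perp_perp N)
    (Nat.eq_of_mul_eq_mul_right Nat.card_pos hcard).le).symm

lemma perp_sup (hq : IsMetric q) (N K : AddSubgroup M) :
    hq.perp (N ⊔ K) = hq.perp N ⊓ hq.perp K := by
  apply le_antisymm
  · exact fun x hx ↦ ⟨fun y hy ↦ hx y (AddSubgroup.mem_sup_left hy),
      fun y hy ↦ hx y (AddSubgroup.mem_sup_right hy)⟩
  · rintro x ⟨hxN, hxK⟩ _ hy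
    obtain ⟨u, hu, v, hv, rfl⟩ := AddSubgroup.mem_sup.mp hy
    rw [hq.bq_add_right, hxN u hu, hxK v hv, one_mul]

lemma perp_inf [Finite M] (hq : IsMetric q) (N K : AddSubgroup M) :
    hq.perp (N ⊓ K) = hq.perp N ⊔ hq.perp K := by
  rw [← hq.perp_perp (hq.perp N ⊔ hq.perp K), hq.perp_sup, hq.perp_perp, hq.perp_perp]

lemma perp_eq_self_of_isLagrangian [Finite M] (hq : IsMetric q) {L : AddSubgroup M}
    (hL : IsLagrangian q L) : hq.perp L = L := by
  have hle : L ≤ hq.perp L := fun _ hx _ hy ↦ bq_eq_one_of_isotropic hL.1 hx hy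
  have hcard : Nat.card (hq.perp L) * Nat.card L = Nat.card L * Nat.card L := by
    rw [hq.card_perp_mul_card, ← sq, hL.2]
  exact (AddSubgroup.eq_of_le_of_card_ge hle
    (Nat.eq_of_mul_eq_mul_right Nat.card_pos hcard).le).symm

lemma forall_bq_eq_one_iff_mem_perp (hq : IsMetric q) (A B C : AddSubgroup M) (x : M) :
    (∀ y₁ y₂ : M, y₁ ∈ A → y₂ ∈ B → y₁ + y₂ ∈ C → bq q x y₂ = 1) ↔
      x ∈ hq.perp (B ⊓ (A ⊔ C)) := by
  simp only [mem_perp, AddSubgroup.mem_inf, AddSubgroup.mem_sup_iff_exists_add_mem]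
  constructor
  · rintro h y ⟨hyB, a, ha, hay⟩
    exact h a y ha hyB hay
  · exact fun h y₁ y₂ hy₁ hy₂ hy ↦ h y₂ ⟨hy₂, y₁, hy₁, hy⟩

end IsMetric

theorem stmt4_general {M : Type*} [AddCommGroup M] [Fintype M] (q : M → ℂˣ)
    (hq : IsMetric q) (L1 L2 L3 : AddSubgroup M)
    (h1 : IsLagrangian q L1) (h2 : IsLagrangian q L2) (h3 : IsLagrangian q L3)
    (x1 x2 : M) (hx2 : x2 ∈ L2) (hx3 : x1 + x2 ∈ L3) :
    (∀ y1 y2 : M, y1 ∈ L1 → y2 ∈ L2 → y1 + y2 ∈ L3 → bq q x1 y2 = 1) ↔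
      x1 + x2 ∈ ((L1 ⊓ L3) ⊔ (L2 ⊓ L3) : AddSubgroup M) := by
  have hperp : hq.perp (L2 ⊓ (L1 ⊔ L3)) = L2 ⊔ L1 ⊓ L3 := by
    rw [hq.perp_inf, hq.perp_sup, hq.perp_eq_self_of_isLagrangian h1,
      hq.perp_eq_self_of_isLagrangian h2, hq.perp_eq_self_of_isLagrangian h3]
  rw [AddSubgroup.add_mem_inf_sup_inf_iff hx2 hx3, ← hperp, hq.forall_bq_eq_one_iff_mem_perp]

/-- The kernel of the bicharacter `c(x,y) = b_q(x1,y2)` on `A = (L1+L2) ∩ L3`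
equals `B = (L1 ∩ L3) + (L2 ∩ L3)`. -/
theorem stmt4 {M : Type*} [AddCommGroup M] [Fintype M] (q : M → ℂˣ)
    (hq : IsMetric q) (L1 L2 L3 : AddSubgroup M)
    (h1 : IsLagrangian q L1) (h2 : IsLagrangian q L2) (h3 : IsLagrangian q L3)
    (x1 x2 : M) (hx1 : x1 ∈ L1) (hx2 : x2 ∈ L2) (hx3 : x1 + x2 ∈ L3) :
    (∀ y1 y2 : M, y1 ∈ L1 → y2 ∈ L2 → y1 + y2 ∈ L3 → bq q x1 y2 = 1) ↔
      x1 + x2 ∈ ((L1 ⊓ L3) ⊔ (L2 ⊓ L3) : AddSubgroup M) :=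
  stmt4_general q hq L1 L2 L3 h1 h2 h3 x1 x2 hx2 hx3
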